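/- Let $K$ be a finite-valued kernel function, $n \in \mathbb{N}$, $\nu_1,\dots,\nu_n > 0$, and let $J$ be an $n$-field function satisfying the two-sided limsup condition: $\limsup_{s \uparrow t} J(s) \ge J(t)$ for all $t \in (0,1]$ and $\limsup_{s \downarrow t} J(s) \ge J(t)$ for all $t \in [0,1)$. Then for each $j \in \{0,\dots,n\}$, the function $m_j(\mathbf{y}) = \sup_{t \in [y_j,y_{j+1}]} F(\mathbf{y},t)$ is lower semicontinuous on the set $S_j := \{\mathbf{x} \in \overline{S} : x_j < x_{j+1}\}$. -/

import Mathlib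

open Set Filter

noncomputable section

/-- A kernel function: finite and concave on `(-1,0)` and `(0,1)`, with equal one-sided
limits at `0`, extended to `[-1,1]` (values in `ℝ ∪ {-∞}`, i.e. never `⊤`) by limits. -/
def IsKernelFunction (K : ℝ → EReal) : Prop :=
  (∀ t ∈ Set.Icc (-1:ℝ) 1, K t ≠ ⊤) ∧
  (∀ t ∈ Set.Ioo (-1:ℝ) 0, K t ≠ ⊥) ∧
  (∀ t ∈ Set.Ioo (0:ℝ) 1, K t ≠ ⊥) ∧
  ConcaveOn ℝ (Set.Ioo (-1:ℝ) 0) (fun t => (K t).toReal) ∧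
  ConcaveOn ℝ (Set.Ioo (0:ℝ) 1) (fun t => (K t).toReal) ∧
  Filter.Tendsto K (nhdsWithin 0 (Set.Iio 0)) (nhds (K 0)) ∧
  Filter.Tendsto K (nhdsWithin 0 (Set.Ioi 0)) (nhds (K 0)) ∧
  Filter.Tendsto K (nhdsWithin (-1) (Set.Ioi (-1:ℝ))) (nhds (K (-1))) ∧
  Filter.Tendsto K (nhdsWithin 1 (Set.Iio (1:ℝ))) (nhds (K 1))

/-- Monotone kernel: non-increasing on `(-1,0)`, non-decreasing on `(0,1)`. -/
def IsMonotoneKernel (K : ℝ → EReal) : Prop :=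
  IsKernelFunction K ∧ AntitoneOn K (Set.Ioo (-1:ℝ) 0) ∧ MonotoneOn K (Set.Ioo (0:ℝ) 1)

/-- The closed simplex of node systems `0 ≤ y 0 ≤ ⋯ ≤ y (n-1) ≤ 1`. -/
def simplex (n : ℕ) : Set (Fin n → ℝ) :=
  {y | Monotone y ∧ ∀ i, y i ∈ Set.Icc (0:ℝ) 1}

/-- The `j`-th node of the node system `y`, with `node y 0 = 0` and `node y (n+1) = 1`. -/
def node {n : ℕ} (y : Fin n → ℝ) (j : ℕ) : ℝ :=
  if h : 1 ≤ j ∧ j ≤ n then y ⟨j - 1, by omega⟩ else if j = 0 then 0 else 1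

/-- An `n`-field function: bounded above on `[0,1]`, with values in `ℝ ∪ {-∞}`, finite
at more than `n` points of `[0,1]`, where `0` and `1` count with weight `1/2`. -/
def IsFieldFunction (n : ℕ) (J : ℝ → EReal) : Prop :=
  (∀ t ∈ Set.Icc (0:ℝ) 1, J t ≠ ⊤) ∧
  (∃ C : ℝ, ∀ t ∈ Set.Icc (0:ℝ) 1, J t ≤ (C : EReal)) ∧
  ∃ T : Finset ℝ, ↑T ⊆ Set.Icc (0:ℝ) 1 ∧ (∀ t ∈ T, J t ≠ ⊥) ∧
    (n : ℝ) < ∑ t ∈ T, (if t = 0 ∨ t = 1 then (1/2 : ℝ) else 1)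

/-- The (weighted) sum of translates function `F(y,t) = J(t) + ∑ ν_j K(t - y_j)`. -/
def Fsum {n : ℕ} (K : ℝ → EReal) (ν : Fin n → ℝ) (J : ℝ → EReal)
    (y : Fin n → ℝ) (t : ℝ) : EReal :=
  J t + ∑ j, (ν j : EReal) * K (t - y j)

/-- The `j`-th interval maximum `m_j(y) = sup_{t ∈ [y_j, y_{j+1}]} F(y,t)`. -/
def mj {n : ℕ} (K : ℝ → EReal) (ν : Fin n → ℝ) (J : ℝ → EReal)
    (y : Fin n → ℝ) (j : ℕ) : EReal :=
  sSup (Fsum K ν J y '' Set.Icc (node y j) (node y (j + 1)))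

/-- The regularity set `Y`: node systems with all interval maxima `> -∞`. -/
def regularitySet {n : ℕ} (K : ℝ → EReal) (ν : Fin n → ℝ) (J : ℝ → EReal) :
    Set (Fin n → ℝ) :=
  {y ∈ simplex n | ∀ j ≤ n, mj K ν J y j ≠ ⊥}

/-- Upper semicontinuous regularization of a function on `[0,1]`. -/
def uscReg (φ : ℝ → EReal) (t : ℝ) : EReal :=
  ⨅ (r : ℝ) (_ : 0 < r), sSup (φ '' (Set.Ioo (t - r) (t + r) ∩ Set.Icc 0 1))

/-- Upper semicontinuous regularization computed within a subset `A` of `[0,1]`. -/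
def uscRegOn (A : Set ℝ) (φ : ℝ → EReal) (t : ℝ) : EReal :=
  ⨅ (r : ℝ) (_ : 0 < r), sSup (φ '' (Set.Ioo (t - r) (t + r) ∩ A))

/-!
Given `c < m_j(x)`, pick `t ∈ [x_j, x_{j+1}]` with `c < F(x,t)`. Since the kernel part of `F(x,·)`
is continuous, the one-sided limsup conditions on `J` let us move `t` into the open interval
`(x_j, x_{j+1})` (nonempty because `x ∈ S_j`) while keeping `c < F(x,t)`. An interior point stays
in `[y_j, y_{j+1}]` for `y` near `x`, and `F(·,t)` is continuous in `y` because the finite kernel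
is continuous on `[-1,1]`; hence `c < F(y,t) ≤ m_j(y)` near `x`.
-/

open Topology

theorem EReal.frequently_lt_add_of_le_limsup {α : Type*} {l : Filter α} {f g : α → EReal}
    {a b c : EReal} (hf : a ≤ limsup f l) (hg : Tendsto g l (𝓝 b)) (hc : c < a + b) :
    ∃ᶠ x in l, c < f x + g x := by
  by_contra h
  rw [not_frequently] at h
  refine hc.not_ge (EReal.add_le_of_forall_lt fun a' ha' b' hb' => ?_)
  have hfreq : ∃ᶠ x in l, a' < f x :=
    frequently_lt_of_lt_limsup (by isBoundedDefault) (ha'.trans_le hf)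
  obtain ⟨x, hfx, hx, hgx⟩ :=
    (hfreq.and_eventually (h.and (hg.eventually (eventually_gt_nhds hb')))).exists
  exact (EReal.add_lt_add hfx hgx).le.trans (not_lt.1 hx)

theorem EReal.continuous_const_add_coe (a : EReal) : Continuous fun r : ℝ => a + r :=
  continuous_iff_continuousAt.2 fun _ =>
    (EReal.continuousAt_add (Or.inr (EReal.coe_ne_bot _)) (Or.inr (EReal.coe_ne_top _))).comp
      (continuous_const.prodMk continuous_coe_real_ereal).continuousAt

theorem continuousOn_of_concaveOn_toReal {f : ℝ → EReal} {s : Set ℝ} (hs : IsOpen s)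
    (hf : ConcaveOn ℝ s fun t => (f t).toReal) (htop : ∀ t ∈ s, f t ≠ ⊤)
    (hbot : ∀ t ∈ s, f t ≠ ⊥) : ContinuousOn f s :=
  (continuous_coe_real_ereal.comp_continuousOn (hf.continuousOn hs)).congr fun t ht =>
    (EReal.coe_toReal (htop t ht) (hbot t ht)).symm

theorem IsKernelFunction.continuousOn {K : ℝ → EReal} (hK : IsKernelFunction K) :
    ContinuousOn K (Icc (-1) 1) := by
  obtain ⟨htop, hbot₁, hbot₂, hconc₁, hconc₂, hleft₀, hright₀, hright₁, hleft₁⟩ := hK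
  have hneg := continuousOn_of_concaveOn_toReal isOpen_Ioo hconc₁
    (fun t ht => htop t ⟨ht.1.le, ht.2.le.trans zero_le_one⟩) hbot₁
  have hpos := continuousOn_of_concaveOn_toReal isOpen_Ioo hconc₂
    (fun t ht => htop t ⟨by linarith [ht.1], ht.2.le⟩) hbot₂
  intro t ⟨ht₁, ht₂⟩
  rcases ht₁.eq_or_lt with rfl | ht₁
  · exact (continuousWithinAt_Ioi_iff_Ici.1 hright₁).mono Icc_subset_Ici_self
  rcases ht₂.eq_or_lt with rfl | ht₂
  · exact (continuousWithinAt_Iio_iff_Iic.1 hleft₁).mono Icc_subset_Iic_self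
  rcases lt_trichotomy t 0 with h | rfl | h
  · exact (hneg.continuousAt (Ioo_mem_nhds ht₁ h)).continuousWithinAt
  · exact (continuousAt_iff_continuous_left'_right'.2 ⟨hleft₀, hright₀⟩).continuousWithinAt
  · exact (hpos.continuousAt (Ioo_mem_nhds h ht₂)).continuousWithinAt

theorem IsKernelFunction.continuousOn_toReal {K : ℝ → EReal} (hK : IsKernelFunction K)
    (hKfin : ∀ t ∈ Icc (-1 : ℝ) 1, K t ≠ ⊥) :
    ContinuousOn (fun t => (K t).toReal) (Icc (-1) 1) :=
  EReal.continuousOn_toReal.comp hK.continuousOn fun t ht => by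
    simp [hK.1 t ht, hKfin t ht]

theorem sub_mem_Icc_neg_one_one {s t : ℝ} (hs : s ∈ Icc (0 : ℝ) 1) (ht : t ∈ Icc (0 : ℝ) 1) :
    s - t ∈ Icc (-1 : ℝ) 1 :=
  ⟨by linarith [hs.1, ht.2], by linarith [hs.2, ht.1]⟩

theorem EReal.coe_finsetSum {ι : Type*} (s : Finset ι) (f : ι → ℝ) :
    ((∑ i ∈ s, f i : ℝ) : EReal) = ∑ i ∈ s, (f i : EReal) :=
  map_sum (⟨⟨((↑) : ℝ → EReal), EReal.coe_zero⟩, EReal.coe_add⟩ : ℝ →+ EReal) f s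

def kernelSum {n : ℕ} (K : ℝ → EReal) (ν : Fin n → ℝ) (y : Fin n → ℝ) (t : ℝ) : ℝ :=
  ∑ i, ν i * (K (t - y i)).toReal

theorem Fsum_eq_add_kernelSum {n : ℕ} {K : ℝ → EReal} (hK : IsKernelFunction K)
    (hKfin : ∀ t ∈ Icc (-1 : ℝ) 1, K t ≠ ⊥) (ν : Fin n → ℝ) (J : ℝ → EReal) {y : Fin n → ℝ}
    {t : ℝ} (hyt : ∀ i, t - y i ∈ Icc (-1 : ℝ) 1) :
    Fsum K ν J y t = J t + kernelSum K ν y t := by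
  rw [Fsum, kernelSum, EReal.coe_finsetSum]
  congr 1
  refine Finset.sum_congr rfl fun i _ => ?_
  rw [EReal.coe_mul, EReal.coe_toReal (hK.1 _ (hyt i)) (hKfin _ (hyt i))]

theorem continuousOn_kernelSum {n : ℕ} {K : ℝ → EReal} (hK : IsKernelFunction K)
    (hKfin : ∀ t ∈ Icc (-1 : ℝ) 1, K t ≠ ⊥) (ν : Fin n → ℝ) :
    ContinuousOn (fun p : (Fin n → ℝ) × ℝ => kernelSum K ν p.1 p.2)
      {p | ∀ i, p.2 - p.1 i ∈ Icc (-1 : ℝ) 1} :=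
  continuousOn_finsetSum _ fun i _ => continuousOn_const.mul <|
    (hK.continuousOn_toReal hKfin).comp (by fun_prop) fun _ hp => hp i

theorem continuousOn_Fsum_simplex {n : ℕ} {K : ℝ → EReal} (hK : IsKernelFunction K)
    (hKfin : ∀ t ∈ Icc (-1 : ℝ) 1, K t ≠ ⊥) (ν : Fin n → ℝ) (J : ℝ → EReal) {t : ℝ}
    (ht : t ∈ Icc (0 : ℝ) 1) :
    ContinuousOn (fun y => Fsum K ν J y t) (simplex n) := by
  have hsub : ∀ y ∈ simplex n, ∀ i, t - y i ∈ Icc (-1 : ℝ) 1 := fun y hy i =>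
    sub_mem_Icc_neg_one_one ht (hy.2 i)
  refine ContinuousOn.congr ?_ fun y hy => Fsum_eq_add_kernelSum hK hKfin ν J (hsub y hy)
  exact (EReal.continuous_const_add_coe _).comp_continuousOn <|
    (continuousOn_kernelSum hK hKfin ν).comp
      (continuous_id.prodMk continuous_const).continuousOn hsub

theorem continuous_node {n : ℕ} (j : ℕ) : Continuous fun y : Fin n → ℝ => node y j := by
  unfold node
  split_ifs <;> fun_prop

theorem node_mem_Icc {n : ℕ} {y : Fin n → ℝ} (hy : y ∈ simplex n) (j : ℕ) :
    node y j ∈ Icc (0 : ℝ) 1 := by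
  unfold node
  split_ifs
  exacts [hy.2 _, left_mem_Icc.2 zero_le_one, right_mem_Icc.2 zero_le_one]

theorem exists_mem_Ioo_lt_add_of_le_limsup {J : ℝ → EReal} {g : ℝ → ℝ} {A : Set ℝ}
    (hg : ContinuousOn g A) {a b : ℝ} (hab : a < b) (ha : a ∈ A) (hb : b ∈ A)
    (hJa : J a ≤ limsup J (𝓝[Ioi a ∩ A] a)) (hJb : J b ≤ limsup J (𝓝[Iio b ∩ A] b))
    {t : ℝ} (ht : t ∈ Icc a b) {c : EReal} (hc : c < J t + g t) :
    ∃ s ∈ Ioo a b, c < J s + g s := by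
  have hgcoe : ContinuousOn (fun s => (g s : EReal)) A :=
    continuous_coe_real_ereal.comp_continuousOn hg
  rcases ht.1.eq_or_lt with rfl | hat
  · have hfreq := EReal.frequently_lt_add_of_le_limsup hJa
      ((hgcoe a ha).mono inter_subset_right) hc
    have hnear : ∀ᶠ s in 𝓝[Ioi a ∩ A] a, s ∈ Ioo a b := by
      filter_upwards [self_mem_nhdsWithin, mem_nhdsWithin_of_mem_nhds (Iio_mem_nhds hab)]
        with s hs hsb
      exact ⟨hs.1, hsb⟩
    obtain ⟨s, hs, hsab⟩ := (hfreq.and_eventually hnear).exists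
    exact ⟨s, hsab, hs⟩
  rcases ht.2.eq_or_lt with rfl | htb
  · have hfreq := EReal.frequently_lt_add_of_le_limsup hJb
      ((hgcoe t hb).mono inter_subset_right) hc
    have hnear : ∀ᶠ s in 𝓝[Iio t ∩ A] t, s ∈ Ioo a t := by
      filter_upwards [self_mem_nhdsWithin, mem_nhdsWithin_of_mem_nhds (Ioi_mem_nhds hab)]
        with s hs has
      exact ⟨has, hs.1⟩
    obtain ⟨s, hs, hsab⟩ := (hfreq.and_eventually hnear).exists
    exact ⟨s, hsab, hs⟩
  exact ⟨t, ⟨hat, htb⟩, hc⟩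

theorem mj_lowerSemicontinuousOn_Sj_general (n : ℕ)
    (K : ℝ → EReal) (hK : IsKernelFunction K)
    (hKfin : ∀ t ∈ Set.Icc (-1:ℝ) 1, K t ≠ ⊥)
    (ν : Fin n → ℝ)
    (J : ℝ → EReal)
    (hlim1 : ∀ t ∈ Set.Ioc (0:ℝ) 1,
      J t ≤ Filter.limsup J (nhdsWithin t (Set.Iio t ∩ Set.Icc 0 1)))
    (hlim2 : ∀ t ∈ Set.Ico (0:ℝ) 1,
      J t ≤ Filter.limsup J (nhdsWithin t (Set.Ioi t ∩ Set.Icc 0 1))) :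
    ∀ j ≤ n, LowerSemicontinuousOn (fun y => mj K ν J y j)
      {y ∈ simplex n | node y j < node y (j + 1)} := by
  intro j _ x ⟨hx, hxj⟩ c hc
  obtain ⟨ha₀, -⟩ := node_mem_Icc hx j
  obtain ⟨-, hb₁⟩ := node_mem_Icc hx (j + 1)
  have hFx : ∀ t ∈ Icc (0 : ℝ) 1, Fsum K ν J x t = J t + kernelSum K ν x t := fun t ht =>
    Fsum_eq_add_kernelSum hK hKfin ν J fun i => sub_mem_Icc_neg_one_one ht (hx.2 i)
  have hg : ContinuousOn (kernelSum K ν x) (Icc 0 1) :=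
    (continuousOn_kernelSum hK hKfin ν).comp (continuous_const.prodMk continuous_id).continuousOn
      fun t ht i => sub_mem_Icc_neg_one_one ht (hx.2 i)
  obtain ⟨_, ⟨t₀, ht₀, rfl⟩, hct₀⟩ := lt_sSup_iff.1 hc
  have hIcc : Icc (node x j) (node x (j + 1)) ⊆ Icc 0 1 := Icc_subset_Icc ha₀ hb₁
  obtain ⟨t, ht, hct⟩ := exists_mem_Ioo_lt_add_of_le_limsup hg hxj (hIcc (left_mem_Icc.2 hxj.le))
    (hIcc (right_mem_Icc.2 hxj.le)) (hlim2 _ ⟨ha₀, hxj.trans_le hb₁⟩)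
    (hlim1 _ ⟨ha₀.trans_lt hxj, hb₁⟩) ht₀ (hFx t₀ (hIcc ht₀) ▸ hct₀)
  have htIcc : t ∈ Icc (0 : ℝ) 1 := hIcc (Ioo_subset_Icc_self ht)
  rw [← hFx t htIcc] at hct
  have hmem : ∀ᶠ y in 𝓝 x, t ∈ Ioo (node y j) (node y (j + 1)) :=
    ((continuous_node j).tendsto x).eventually (eventually_lt_nhds ht.1) |>.and <|
      ((continuous_node (j + 1)).tendsto x).eventually (eventually_gt_nhds ht.2)
  have hF : ∀ᶠ y in 𝓝[simplex n] x, c < Fsum K ν J y t :=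
    (continuousOn_Fsum_simplex hK hKfin ν J htIcc x hx).eventually (eventually_gt_nhds hct)
  filter_upwards [nhdsWithin_mono x (fun y hy => hy.1) hF, mem_nhdsWithin_of_mem_nhds hmem]
    with y hcy hty
  exact hcy.trans_le (le_sSup (mem_image_of_mem _ (Ioo_subset_Icc_self hty)))

/-- For a finite-valued kernel and a field satisfying the two-sided limsup condition,
each `m_j` is lower semicontinuous on `S_j = {x ∈ S̄ : x_j < x_{j+1}}`. -/
theorem mj_lowerSemicontinuousOn_Sj (n : ℕ) (hn : 0 < n)
    (K : ℝ → EReal) (hK : IsKernelFunction K)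
    (hKfin : ∀ t ∈ Set.Icc (-1:ℝ) 1, K t ≠ ⊥)
    (ν : Fin n → ℝ) (hν : ∀ i, 0 < ν i)
    (J : ℝ → EReal) (hJ : IsFieldFunction n J)
    (hlim1 : ∀ t ∈ Set.Ioc (0:ℝ) 1,
      J t ≤ Filter.limsup J (nhdsWithin t (Set.Iio t ∩ Set.Icc 0 1)))
    (hlim2 : ∀ t ∈ Set.Ico (0:ℝ) 1,
      J t ≤ Filter.limsup J (nhdsWithin t (Set.Ioi t ∩ Set.Icc 0 1))) :
    ∀ j ≤ n, LowerSemicontinuousOn (fun y => mj K ν J y j)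
      {y ∈ simplex n | node y j < node y (j + 1)} :=
  mj_lowerSemicontinuousOn_Sj_general n K hK hKfin ν J hlim1 hlim2
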